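/- arXiv:1207.1305 — 2 statements merged into one kernel-verified Lean document; each statement's English description precedes it below -/
import Mathlib

section
/- The function l(x) = f(x)/f(π - x) is injective on (0, 2π/3), where f(x) = sin(x)·(1 - 1/(8·sin³(x/2))). -/
/-!
Since `sin (π - x) = sin x` and `sin ((π - x) / 2) = cos (x / 2)`, the factor `sin x` cancels and
`l x = fFactor (sin (x / 2)) / fFactor (cos (x / 2))` with `fFactor t = 1 - 1 / (8 t³)`.
On `(0, 2π/3)` we have `cos (x / 2) > 1 / 2`, so the denominator is positive, and the
derivative of `l` has the sign of `8 (s⁵ + c⁵) - (s² + c²)` for `s = sin (x / 2)`,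
`c = cos (x / 2)`. This is positive because `max s c ≥ 1 / √2`, so `l` is strictly increasing.
-/

open Real Set

noncomputable def f (x : ℝ) : ℝ := Real.sin x * (1 - 1 / (8 * Real.sin (x/2)^3))

noncomputable def fFactor (t : ℝ) : ℝ := 1 - 1 / (8 * t ^ 3)

lemma hasDerivAt_fFactor {t : ℝ} (ht : t ≠ 0) : HasDerivAt fFactor (3 / (8 * t ^ 4)) t := by
  have h := ((hasDerivAt_const t (1 : ℝ)).div ((hasDerivAt_pow 3 t).const_mul 8)
    (by positivity)).const_sub 1
  refine h.congr_deriv ?_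
  field_simp
  ring

lemma fFactor_pos {t : ℝ} (ht : 1 / 2 < t) : 0 < fFactor t := by
  have h : (1 / 2 : ℝ) ^ 3 < t ^ 3 := by gcongr
  unfold fFactor
  rw [sub_pos, div_lt_one (by positivity)]
  linarith

lemma f_div_f_pi_sub {x : ℝ} (hx : sin x ≠ 0) :
    f x / f (π - x) = fFactor (sin (x / 2)) / fFactor (cos (x / 2)) := by
  have hhalf : (π - x) / 2 = π / 2 - x / 2 := by ring
  simp only [f, sin_pi_sub, hhalf, sin_pi_div_two_sub, mul_div_mul_left _ _ hx, fFactor]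

lemma one_lt_eight_mul_pow_five_add_pow_five {s c : ℝ} (hs : 0 ≤ s) (hc : 0 ≤ c)
    (h : s ^ 2 + c ^ 2 = 1) : 1 < 8 * (s ^ 5 + c ^ 5) := by
  wlog hsc : s ≤ c generalizing s c
  · linarith [this hc hs (by linarith) (by linarith)]
  have hc2 : 1 / 2 ≤ c ^ 2 := by nlinarith
  have hc1 : 1 / 2 < c := by nlinarith
  have hc5 : c ^ 5 = c * (c ^ 2) ^ 2 := by ring
  have hc4 : 1 / 4 ≤ (c ^ 2) ^ 2 := by nlinarith
  nlinarith [pow_nonneg hs 5]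

lemma hasDerivAt_fFactor_sin_div_fFactor_cos {x : ℝ} (hs : sin (x / 2) ≠ 0)
    (hc : cos (x / 2) ≠ 0) (hden_ne : fFactor (cos (x / 2)) ≠ 0) :
    HasDerivAt (fun y ↦ fFactor (sin (y / 2)) / fFactor (cos (y / 2)))
      (3 * (8 * (sin (x / 2) ^ 5 + cos (x / 2) ^ 5) - 1) /
        (128 * sin (x / 2) ^ 4 * cos (x / 2) ^ 4 * fFactor (cos (x / 2)) ^ 2)) x := by
  have hhalf := (hasDerivAt_id x).div_const 2
  have hnum := (hasDerivAt_fFactor hs).comp x ((hasDerivAt_sin _).comp x hhalf)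
  have hden := (hasDerivAt_fFactor hc).comp x ((hasDerivAt_cos _).comp x hhalf)
  refine (hnum.div hden hden_ne).congr_deriv ?_
  have hc3 : 8 * cos (x / 2) ^ 3 - 1 ≠ 0 := by
    contrapose! hden_ne
    simp only [fFactor]
    field_simp
    linarith
  simp only [Function.comp_apply, id, fFactor]
  field_simp
  linear_combination -128 * sin_sq_add_cos_sq (x / 2)

lemma sin_half_pos_and_half_lt_cos_half {x : ℝ} (hx : x ∈ Ioo 0 (2 * π / 3)) :
    0 < sin (x / 2) ∧ 1 / 2 < cos (x / 2) := by
  obtain ⟨hx0, hx1⟩ := hx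
  refine ⟨sin_pos_of_pos_of_lt_pi (by linarith) (by linarith [pi_pos]), ?_⟩
  rw [← cos_pi_div_three]
  exact cos_lt_cos_of_nonneg_of_le_pi (by linarith) (by linarith [pi_pos]) (by linarith)

lemma strictMonoOn_fFactor_sin_div_fFactor_cos :
    StrictMonoOn (fun x ↦ fFactor (sin (x / 2)) / fFactor (cos (x / 2))) (Ioo 0 (2 * π / 3)) := by
  have hderiv : ∀ x ∈ Ioo 0 (2 * π / 3), HasDerivAt _ _ x := fun x hx ↦
    have ⟨hs, hc⟩ := sin_half_pos_and_half_lt_cos_half hx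
    hasDerivAt_fFactor_sin_div_fFactor_cos hs.ne' (by linarith : (0 : ℝ) < _).ne'
      (fFactor_pos hc).ne'
  refine strictMonoOn_of_hasDerivWithinAt_pos (convex_Ioo _ _)
    (fun x hx ↦ (hderiv x hx).continuousAt.continuousWithinAt)
    (fun x hx ↦ (hderiv x (interior_subset hx)).hasDerivWithinAt) fun x hx ↦ ?_
  rw [interior_Ioo] at hx
  obtain ⟨hs, hc⟩ := sin_half_pos_and_half_lt_cos_half hx
  have hnum := one_lt_eight_mul_pow_five_add_pow_five hs.le (by linarith) (sin_sq_add_cos_sq _)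
  have hden := fFactor_pos hc
  exact div_pos (by linarith) (by positivity)

theorem stmt11 : InjOn (fun x => f x / f (π - x)) (Ioo 0 (2*π/3)) := by
  refine strictMonoOn_fFactor_sin_div_fFactor_cos.injOn.congr fun x ⟨hx0, hx1⟩ ↦ ?_
  have hsin : sin x ≠ 0 := (sin_pos_of_pos_of_lt_pi hx0 (by linarith [pi_pos])).ne'
  exact (f_div_f_pi_sub hsin).symm
end

section
/- Let p(x) = f'(x)·f(π-x) + f(x)·f'(π-x) for x ∈ (0, π). Then p attains its minimum at x = π/2 and p(x) ≥ p(π/2) = 2·f'(π/2)·f(π/2) > 0 for all x ∈ (0, π). -/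
/-!
Write `s = sin (x / 2)`, `c = cos (x / 2)`. Then `f x = sin x - c / (4 s²)`, and `x ↦ π - x` swaps
`s` and `c`, which turns `p x` into `3 (8 s⁵ + 8 c⁵ - 1) / (32 s² c²)`. In terms of
`u = s + c ∈ (1, √2]` one has `4 s² c² = (u² - 1)²` and `8 s⁵ + 8 c⁵ = 10 u - 2 u⁵`, and
`10 u - 2 u⁵ - 1 - (2√2 - 1) (u² - 1)² = (√2 - u) Q(u)` with `Q ≥ 0` on `[1, ∞)`.
So `p` is smallest where `u = √2`, i.e. at `x = π / 2`, with value `3 (2√2 - 1) / 8 > 0`.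
-/

open Real Set

lemma sin_eq_two_mul_sin_half_mul_cos_half (x : ℝ) : sin x = 2 * sin (x / 2) * cos (x / 2) := by
  rw [← sin_two_mul, mul_div_cancel₀ x two_ne_zero]

lemma cos_eq_two_mul_cos_half_sq_sub_one (x : ℝ) : cos x = 2 * cos (x / 2) ^ 2 - 1 := by
  rw [← cos_two_mul, mul_div_cancel₀ x two_ne_zero]

lemma sin_half_pos {x : ℝ} (h₀ : 0 < x) (h₁ : x < 2 * π) : 0 < sin (x / 2) :=
  sin_pos_of_pos_of_lt_pi (by linarith) (by linarith)

lemma cos_half_pos {x : ℝ} (h₀ : -π < x) (h₁ : x < π) : 0 < cos (x / 2) :=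
  cos_pos_of_mem_Ioo ⟨by linarith, by linarith⟩

lemma f_eq_sin_sub (x : ℝ) : f x = sin x - cos (x / 2) / (4 * sin (x / 2) ^ 2) := by
  have hsin := sin_eq_two_mul_sin_half_mul_cos_half x
  rcases eq_or_ne (sin (x / 2)) 0 with hs | hs
  · simp [f, hsin, hs]
  · rw [f, hsin]
    field_simp
    ring

lemma hasDerivAt_f {x : ℝ} (hs : sin (x / 2) ≠ 0) :
    HasDerivAt f (cos x + (1 + cos (x / 2) ^ 2) / (8 * sin (x / 2) ^ 3)) x := by
  rw [show f = fun y => sin y - cos (y / 2) / (4 * sin (y / 2) ^ 2) from funext f_eq_sin_sub]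
  have hhalf : HasDerivAt (fun y : ℝ => y / 2) (1 / 2) x := (hasDerivAt_id x).div_const 2
  have hnum := hhalf.cos
  have hden := (hhalf.sin.fun_pow 2).const_mul 4
  refine ((hasDerivAt_sin x).fun_sub (hnum.fun_div hden (by simp [hs]))).congr_deriv ?_
  norm_num
  field_simp
  linear_combination 8 * sin_sq_add_cos_sq (x / 2)

lemma deriv_f {x : ℝ} (hs : sin (x / 2) ≠ 0) :
    deriv f x = cos x + (1 + cos (x / 2) ^ 2) / (8 * sin (x / 2) ^ 3) :=
  (hasDerivAt_f hs).deriv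

lemma half_angle_form_identity {s c : ℝ} (hs : s ≠ 0) (hc : c ≠ 0) (h : s ^ 2 + c ^ 2 = 1) :
    (2 * c ^ 2 - 1 + (1 + c ^ 2) / (8 * s ^ 3)) * (2 * s * c - s / (4 * c ^ 2)) +
        (2 * s * c - c / (4 * s ^ 2)) * (-(2 * c ^ 2 - 1) + (1 + s ^ 2) / (8 * c ^ 3)) =
      3 * (8 * s ^ 5 + 8 * c ^ 5 - 1) / (32 * s ^ 2 * c ^ 2) := by
  field_simp
  linear_combination (-32 - 512 * s ^ 3) * h

lemma deriv_f_mul_f_pi_sub_add {x : ℝ} (hx : x ∈ Ioo 0 π) :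
    deriv f x * f (π - x) + f x * deriv f (π - x) =
      3 * (8 * sin (x / 2) ^ 5 + 8 * cos (x / 2) ^ 5 - 1) /
        (32 * sin (x / 2) ^ 2 * cos (x / 2) ^ 2) := by
  have hs := sin_half_pos hx.1 (by linarith [hx.2, pi_pos])
  have hc := cos_half_pos (by linarith [hx.1, pi_pos]) hx.2
  have hhalf : (π - x) / 2 = π / 2 - x / 2 := by ring
  have hsin : sin ((π - x) / 2) = cos (x / 2) := by rw [hhalf, sin_pi_div_two_sub]
  have hcos : cos ((π - x) / 2) = sin (x / 2) := by rw [hhalf, cos_pi_div_two_sub]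
  rw [deriv_f hs.ne', deriv_f (hsin ▸ hc.ne'), f_eq_sin_sub, f_eq_sin_sub, hsin, hcos, sin_pi_sub,
    cos_pi_sub, sin_eq_two_mul_sin_half_mul_cos_half x, cos_eq_two_mul_cos_half_sq_sub_one x]
  exact half_angle_form_identity hs.ne' hc.ne' (sin_sq_add_cos_sq _)

lemma quintic_bound_of_mem_Icc {u : ℝ} (hu : u ∈ Icc 1 √2) :
    (2 * √2 - 1) * (u ^ 2 - 1) ^ 2 ≤ 10 * u - 2 * u ^ 5 - 1 := by
  have hr2 : √2 ^ 2 = 2 := sq_sqrt zero_le_two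
  have hQ : 0 ≤ 2 * u ^ 4 + (4 * √2 - 1) * u ^ 3 + (8 - √2) * u ^ 2 + 4 * √2 * u - 2 := by
    have : 1 ≤ u ^ 4 := one_le_pow₀ hu.1
    have : 0 ≤ u ^ 3 := pow_nonneg (by linarith [hu.1]) 3
    have : √2 < 2 := by nlinarith [sqrt_nonneg 2]
    nlinarith [one_lt_sqrt_two, hu.1]
  have hfactor : 10 * u - 2 * u ^ 5 - 1 - (2 * √2 - 1) * (u ^ 2 - 1) ^ 2 =
      (√2 - u) * (2 * u ^ 4 + (4 * √2 - 1) * u ^ 3 + (8 - √2) * u ^ 2 + 4 * √2 * u - 2) := by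
    linear_combination (u ^ 2 - 4 * u ^ 3 - 4 * u) * hr2
  nlinarith [mul_nonneg (sub_nonneg.mpr hu.2) hQ]

lemma quintic_bound_of_sq_add_sq_eq_one {s c : ℝ} (hs : 0 < s) (hc : 0 < c)
    (h : s ^ 2 + c ^ 2 = 1) : (2 * √2 - 1) * (4 * s ^ 2 * c ^ 2) ≤ 8 * s ^ 5 + 8 * c ^ 5 - 1 := by
  have hprod : 2 * s * c = (s + c) ^ 2 - 1 := by linear_combination -h
  have hquintic : 8 * s ^ 5 + 8 * c ^ 5 = 10 * (s + c) - 2 * (s + c) ^ 5 := by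
    linear_combination 10 * (s + c) * (1 + s ^ 2 + c ^ 2) * h
  have hlower : 1 ≤ s + c := by nlinarith
  have hupper : s + c ≤ √2 := (le_sqrt' (by positivity)).2 (by nlinarith [sq_nonneg (s - c)])
  calc (2 * √2 - 1) * (4 * s ^ 2 * c ^ 2) = (2 * √2 - 1) * ((s + c) ^ 2 - 1) ^ 2 := by
        rw [← hprod]; ring
    _ ≤ 10 * (s + c) - 2 * (s + c) ^ 5 - 1 := quintic_bound_of_mem_Icc ⟨hlower, hupper⟩
    _ = 8 * s ^ 5 + 8 * c ^ 5 - 1 := by rw [hquintic]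

theorem stmt12 :
    let p : ℝ → ℝ := fun x => deriv f x * f (π - x) + f x * deriv f (π - x)
    (∀ x ∈ Ioo (0:ℝ) π, p x ≥ p (π/2)) ∧
    p (π/2) = 2 * deriv f (π/2) * f (π/2) ∧
    p (π/2) > 0 := by
  intro p
  have hmid : p (π / 2) = 3 * (2 * √2 - 1) / 8 := by
    rw [show p (π / 2) = _ from deriv_f_mul_f_pi_sub_add ⟨by positivity, by linarith [pi_pos]⟩,
      show π / 2 / 2 = π / 4 by ring, sin_pi_div_four, cos_pi_div_four]
    field_simp
    linear_combination 64 * (√2 ^ 2 + 2) * sq_sqrt (zero_le_two : (0 : ℝ) ≤ 2)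
  refine ⟨fun x hx => ?_, ?_, ?_⟩
  · have hs := sin_half_pos hx.1 (by linarith [hx.2, pi_pos])
    have hc := cos_half_pos (by linarith [hx.1, pi_pos]) hx.2
    rw [hmid, show p x = _ from deriv_f_mul_f_pi_sub_add hx, ge_iff_le,
      div_le_div_iff₀ (by norm_num) (by positivity)]
    linarith [quintic_bound_of_sq_add_sq_eq_one hs hc (sin_sq_add_cos_sq _)]
  · show deriv f (π / 2) * f (π - π / 2) + f (π / 2) * deriv f (π - π / 2) = _
    rw [show π - π / 2 = π / 2 by ring]
    ring
  · rw [hmid]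
    linarith [one_lt_sqrt_two]
end
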